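/- arXiv:0909.1879 — 2 statements merged into one kernel-verified Lean document; each statement's English description precedes it below -/
import Mathlib

section
/- With θ(x,q) = (x;q)_∞ (q/x;q)_∞ / (q;q)_∞^2, for every positive integer h, 0 < |q| < 1, and x ∈ C^×, one has θ(x,q) = ((q^h;q^h)_∞^{2h} / (q;q)_∞^2) · Π_{s=0}^{h−1} θ(q^s x, q^h). -/
open scoped BigOperators

noncomputable def qPoch (x q : ℂ) : ℂ := ∏' n : ℕ, (1 - x * q ^ n)

noncomputable def theta (x q : ℂ) : ℂ := qPoch x q * qPoch (q / x) q / (qPoch q q) ^ 2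

/-!
Splitting the index `n` of `(x;q)_∞` by its residue `s` modulo `h` gives
`(x;q)_∞ = ∏_{s<h} (q^s x; q^h)_∞`. Doing the same for `(q/x;q)_∞` and reversing
`s ↦ h - 1 - s` gives `(q/x;q)_∞ = ∏_{s<h} (q^h/(q^s x); q^h)_∞`, so the product of the
`θ(q^s x, q^h)` is `(x;q)_∞ (q/x;q)_∞` up to the normalising factor `(q^h;q^h)_∞^{2h}`.
-/

open Finset

theorem Multipliable.tprod_eq_prod_range_tprod {α : Type*} [CommMonoid α] [TopologicalSpace α]
    [ContinuousMul α] [T3Space α] {f : ℕ → α} (hf : Multipliable f) {h : ℕ} (hh : 0 < h)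
    (hres : ∀ s, Multipliable fun m => f (m * h + s)) :
    ∏' n, f n = ∏ s ∈ range h, ∏' m, f (m * h + s) := by
  have : NeZero h := ⟨hh.ne'⟩
  let e : Fin h × ℕ ≃ ℕ := ((Nat.divModEquiv h).trans (Equiv.prodComm _ _)).symm
  have he : ∀ p, e p = p.2 * h + p.1 := fun p => by simp [e, Nat.divModEquiv]
  have hfe : Multipliable fun p => f (e p) := e.multipliable_iff.mpr hf
  rw [← e.tprod_eq, hfe.tprod_prod' fun s => by simpa only [he] using hres s, tprod_fintype,
    ← Fin.prod_univ_eq_prod_range (fun s => ∏' m, f (m * h + s))]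
  simp only [he]

section qPoch

variable {q : ℂ}

theorem summable_norm_neg_mul_pow (y : ℂ) (hq : ‖q‖ < 1) :
    Summable fun n : ℕ => ‖-(y * q ^ n)‖ := by
  simpa using (summable_geometric_of_lt_one (norm_nonneg q) hq).mul_left ‖y‖

theorem multipliable_one_sub_mul_pow (y : ℂ) (hq : ‖q‖ < 1) :
    Multipliable fun n : ℕ => 1 - y * q ^ n := by
  simpa only [sub_eq_add_neg] using
    multipliable_one_add_of_summable (summable_norm_neg_mul_pow y hq)

theorem qPoch_ne_zero {y : ℂ} (hq : ‖q‖ < 1) (hy : ∀ n : ℕ, 1 - y * q ^ n ≠ 0) :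
    qPoch y q ≠ 0 := by
  simpa only [qPoch, sub_eq_add_neg] using tprod_one_add_ne_zero_of_summable
    (by simpa only [sub_eq_add_neg] using hy) (summable_norm_neg_mul_pow y hq)

theorem qPoch_self_ne_zero (hq : ‖q‖ < 1) : qPoch q q ≠ 0 := by
  refine qPoch_ne_zero hq fun n hn => ?_
  have hnorm : ‖q ^ (n + 1)‖ < 1 :=
    (norm_pow q _).trans_lt (pow_lt_one₀ (norm_nonneg q) hq n.succ_ne_zero)
  rw [pow_succ', ← sub_eq_zero.mp hn, norm_one] at hnorm
  exact hnorm.false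

theorem qPoch_eq_prod_range (y : ℂ) (hq : ‖q‖ < 1) {h : ℕ} (hh : 0 < h) :
    qPoch y q = ∏ s ∈ range h, qPoch (q ^ s * y) (q ^ h) := by
  have hqh : ‖q ^ h‖ < 1 := (norm_pow q h).trans_lt (pow_lt_one₀ (norm_nonneg q) hq hh.ne')
  have hterm : ∀ s m : ℕ, 1 - y * q ^ (m * h + s) = 1 - q ^ s * y * (q ^ h) ^ m := by
    intro s m
    ring
  simp only [qPoch, (multipliable_one_sub_mul_pow y hq).tprod_eq_prod_range_tprod hh
    fun s => (multipliable_one_sub_mul_pow (q ^ s * y) hqh).congr fun m => (hterm s m).symm,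
    hterm]

theorem qPoch_div_eq_prod_range (x : ℂ) (hq : ‖q‖ < 1) {h : ℕ} (hh : 0 < h) :
    qPoch (q / x) q = ∏ s ∈ range h, qPoch (q ^ h / (q ^ s * x)) (q ^ h) := by
  rw [qPoch_eq_prod_range _ hq hh, ← prod_range_reflect]
  refine prod_congr rfl fun s hs => ?_
  have hsh : s < h := mem_range.mp hs
  have hpow : q ^ (h - 1 - s) * q = q ^ h * (q ^ s)⁻¹ := by
    rw [← pow_succ, show h - 1 - s + 1 = h - s by omega, pow_sub_of_lt q hsh]
  rw [div_eq_mul_inv, ← mul_assoc, hpow, div_eq_mul_inv, mul_inv, mul_assoc]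

end qPoch

theorem theta_factorization_general (q x : ℂ) (h : ℕ) (hh : 0 < h)
    (hq1 : ‖q‖ < 1) :
    theta x q =
      (qPoch (q ^ h) (q ^ h)) ^ (2 * h) / (qPoch q q) ^ 2 *
        ∏ s ∈ Finset.range h, theta (q ^ s * x) (q ^ h) := by
  have hqh : ‖q ^ h‖ < 1 := (norm_pow q h).trans_lt (pow_lt_one₀ (norm_nonneg q) hq1 hh.ne')
  have hprod : ∏ s ∈ range h, theta (q ^ s * x) (q ^ h)
      = qPoch x q * qPoch (q / x) q / qPoch (q ^ h) (q ^ h) ^ (2 * h) := by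
    simp only [theta]
    rw [prod_div_distrib, prod_mul_distrib, prod_const, card_range, ← pow_mul,
      ← qPoch_eq_prod_range x hq1 hh, ← qPoch_div_eq_prod_range x hq1 hh]
  rw [theta, hprod, div_mul_div_comm, mul_comm (qPoch q q ^ 2),
    mul_div_mul_left _ _ (pow_ne_zero _ (qPoch_self_ne_zero hqh))]

theorem theta_factorization (q x : ℂ) (h : ℕ) (hh : 0 < h)
    (hq0 : 0 < ‖q‖) (hq1 : ‖q‖ < 1) (hx : x ≠ 0) :
    theta x q =
      (qPoch (q ^ h) (q ^ h)) ^ (2 * h) / (qPoch q q) ^ 2 *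
        ∏ s ∈ Finset.range h, theta (q ^ s * x) (q ^ h) :=
  theta_factorization_general q x h hh hq1
end

section
/- Let h ≥ 1, d a divisor of h, δ an integer, and v ∈ Z^2. Then (1/h) Σ_{v' ∈ (Z/h)^2} ζ_h^{(v∧v')δ} (Δ_{h/d})_{v+v'} = gcd(δ,d) · (Δ_{d/gcd(δ,d)})_v, where (Δ_m)_{(r,s)} = m if m | r and m | s, and 0 otherwise, v∧v' is the symplectic product, and ζ_h = e^{2πi/h}. -/
/-!
Write `h = m d` and let `ζ` be a primitive `h`-th root of unity. Both the phase
`ζ ^ ((v ∧ v') δ)` and `Δ_m (v + v')` factor over the two coordinates, so the double sum is `m`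
times a product of two sums `∑ₖ ζ ^ (t k) [m ∣ x + k]`. Shifting `k` by `x` (the summand is
`h`-periodic) turns such a sum into `ζ ^ (-t x)` times a full character sum of the primitive
`d`-th root `ζ ^ m`, which is `d` or `0` according as `d ∣ t`. The two phases cancel because
`v ∧ v = 0`, leaving `m d Δ_d (r δ, s δ)`; finally `d ∣ r δ ↔ d / gcd(δ, d) ∣ r`.
-/

open scoped BigOperators

noncomputable def DeltaF (m : ℕ) (r s : ℤ) : ℂ :=
  if (m : ℤ) ∣ r ∧ (m : ℤ) ∣ s then (m : ℂ) else 0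

open Finset

theorem Function.Periodic.sum_range_int_add {M : Type*} [AddCancelCommMonoid M] {f : ℤ → M}
    {n : ℕ} (hf : Function.Periodic f n) (x : ℤ) :
    ∑ k ∈ range n, f (x + k) = ∑ k ∈ range n, f k := by
  have shift : ∀ y : ℤ, ∑ k ∈ range n, f (y + 1 + k) = ∑ k ∈ range n, f (y + k) := by
    intro y
    have h := (sum_range_succ (fun k : ℕ => f (y + k)) n).symm.trans
      (sum_range_succ' (fun k : ℕ => f (y + k)) n)
    rw [hf y, Nat.cast_zero, add_zero, add_left_inj] at h
    rw [h]
    refine sum_congr rfl fun k _ => ?_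
    push_cast
    ring_nf
  induction x using Int.induction_on with
  | zero => simp
  | succ y ih => rw [shift, ih]
  | pred y ih => rw [← ih, ← shift, sub_add_cancel]

theorem Finset.sum_range_mul_ite_dvd {M : Type*} [AddCommMonoid M] (m d : ℕ) (hm : m ≠ 0)
    (g : ℕ → M) :
    ∑ k ∈ range (m * d), (if m ∣ k then g k else 0) = ∑ a ∈ range d, g (m * a) := by
  have hfilter : (range (m * d)).filter (m ∣ ·) = (range d).image (m * ·) := by
    ext k
    simp only [mem_filter, mem_range, mem_image]
    constructor
    · rintro ⟨hk, a, rfl⟩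
      exact ⟨a, lt_of_mul_lt_mul_left hk (Nat.zero_le m), rfl⟩
    · rintro ⟨a, ha, rfl⟩
      exact ⟨Nat.mul_lt_mul_of_pos_left ha (Nat.pos_of_ne_zero hm), dvd_mul_right m a⟩
  rw [← sum_filter, hfilter, sum_image fun a _ b _ hab => Nat.eq_of_mul_eq_mul_left
    (Nat.pos_of_ne_zero hm) hab]

theorem IsPrimitiveRoot.sum_range_zpow_mul {K : Type*} [Field K] {ξ : K} {d : ℕ}
    (hξ : IsPrimitiveRoot ξ d) (t : ℤ) :
    ∑ a ∈ range d, ξ ^ (t * a) = if (d : ℤ) ∣ t then (d : K) else 0 := by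
  simp_rw [zpow_mul, zpow_natCast]
  split_ifs with hdt
  · simp [(hξ.zpow_eq_one_iff_dvd t).mpr hdt]
  · have hne : ξ ^ t ≠ 1 := (hξ.zpow_eq_one_iff_dvd t).not.mpr hdt
    rw [geom_sum_eq hne, ← zpow_natCast, ← zpow_mul, mul_comm, zpow_mul, zpow_natCast,
      hξ.pow_eq_one, one_zpow, sub_self, zero_div]

theorem IsPrimitiveRoot.sum_range_ite_dvd_add_zpow_mul {K : Type*} [Field K] {ζ : K} {m d : ℕ}
    (hζ : IsPrimitiveRoot ζ (m * d)) (hm : 0 < m) (hd : 0 < d) (t x : ℤ) :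
    ∑ k ∈ range (m * d), (if (m : ℤ) ∣ x + k then ζ ^ (t * k) else 0) =
      if (d : ℤ) ∣ t then d * ζ ^ (-(t * x)) else 0 := by
  have hζ0 : ζ ≠ 0 := hζ.ne_zero (Nat.mul_pos hm hd).ne'
  set f : ℤ → K := fun n => if (m : ℤ) ∣ n then ζ ^ (t * n) else 0
  have hf : Function.Periodic f (m * d : ℕ) := by
    intro n
    have hpow : ζ ^ (t * (m * d : ℕ)) = 1 := by
      rw [mul_comm, zpow_mul, zpow_natCast, hζ.pow_eq_one, one_zpow]
    have hdvd : (m : ℤ) ∣ (m * d : ℕ) := ⟨d, by push_cast; rfl⟩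
    simp only [f, mul_add, zpow_add₀ hζ0, hpow, mul_one, dvd_add_left hdvd]
  have hshift : ∀ k : ℕ, (if (m : ℤ) ∣ x + k then ζ ^ (t * k) else 0) =
      ζ ^ (-(t * x)) * f (x + k) := by
    intro k
    simp only [f, mul_ite, mul_zero, ← zpow_add₀ hζ0]
    ring_nf
  rw [sum_congr rfl fun k _ => hshift k, ← mul_sum, hf.sum_range_int_add]
  have hsum : ∑ k ∈ range (m * d), f k = ∑ a ∈ range d, (ζ ^ m) ^ (t * a) := by
    simp only [f, Int.natCast_dvd_natCast]
    rw [sum_range_mul_ite_dvd m d hm.ne' fun k => ζ ^ (t * k)]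
    refine sum_congr rfl fun a _ => ?_
    rw [← zpow_natCast, ← zpow_mul]
    push_cast
    ring_nf
  rw [hsum, (hζ.pow (Nat.mul_pos hm hd) rfl).sum_range_zpow_mul t, mul_ite, mul_zero, mul_comm]

theorem IsPrimitiveRoot.sum_sum_zpow_wedge_mul_deltaF {ζ : ℂ} {m d : ℕ}
    (hζ : IsPrimitiveRoot ζ (m * d)) (hm : 0 < m) (hd : 0 < d) (δ r s : ℤ) :
    ∑ r' ∈ range (m * d), ∑ s' ∈ range (m * d),
        ζ ^ ((r * s' - s * r') * δ) * DeltaF m (r + r') (s + s') =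
      m * d * DeltaF d (r * δ) (s * δ) := by
  have hζ0 : ζ ≠ 0 := hζ.ne_zero (Nat.mul_pos hm hd).ne'
  have hterm : ∀ r' s' : ℕ, ζ ^ ((r * s' - s * r') * δ) * DeltaF m (r + r') (s + s') =
      m * ((if (m : ℤ) ∣ r + r' then ζ ^ (-(s * δ) * r') else 0) *
        (if (m : ℤ) ∣ s + s' then ζ ^ (r * δ * s') else 0)) := by
    intro r' s'
    have hsplit : ζ ^ ((r * s' - s * r') * δ) = ζ ^ (-(s * δ) * r') * ζ ^ (r * δ * s') := by
      rw [← zpow_add₀ hζ0]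
      ring_nf
    by_cases ha : (m : ℤ) ∣ r + r' <;> by_cases hb : (m : ℤ) ∣ s + s' <;>
      simp only [DeltaF, ha, hb, hsplit, and_true, and_false, if_true, if_false, mul_zero,
        zero_mul]
    ring
  simp_rw [hterm, ← mul_sum, ← sum_mul, hζ.sum_range_ite_dvd_add_zpow_mul hm hd]
  have hphase : ζ ^ (-(-(s * δ) * r)) * ζ ^ (-(r * δ * s)) = 1 := by
    rw [← zpow_add₀ hζ0]
    ring_nf
    exact zpow_zero ζ
  by_cases hr : (d : ℤ) ∣ r * δ <;> by_cases hs : (d : ℤ) ∣ s * δ <;>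
    simp only [DeltaF, dvd_neg, hr, hs, and_true, and_false, if_true, if_false, mul_zero, zero_mul]
  linear_combination (m * d * d : ℂ) * hphase

theorem Int.natCast_dvd_mul_iff_div_gcd_dvd {d : ℕ} (hd : d ≠ 0) (δ r : ℤ) :
    (d : ℤ) ∣ r * δ ↔ ((d / Int.gcd δ d : ℕ) : ℤ) ∣ r := by
  rw [← dvd_mul_gcd_iff_dvd_mul, Int.gcd_comm]
  set g := Int.gcd δ d
  have hg : (g : ℤ) ≠ 0 := by
    exact_mod_cast (Int.gcd_pos_of_ne_zero_right δ (by exact_mod_cast hd)).ne'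
  have hgd : (d : ℤ) = ((d / g : ℕ) : ℤ) * g := by
    exact_mod_cast (Nat.div_mul_cancel (by exact_mod_cast Int.gcd_dvd_right δ d : g ∣ d)).symm
  rw [hgd]
  exact mul_dvd_mul_iff_right hg

theorem deltaF_mul_right {d : ℕ} (hd : d ≠ 0) (δ r s : ℤ) :
    DeltaF d (r * δ) (s * δ) = Int.gcd δ d * DeltaF (d / Int.gcd δ d) r s := by
  have hgd : Int.gcd δ d ∣ d := by exact_mod_cast Int.gcd_dvd_right δ d
  simp only [DeltaF, Int.natCast_dvd_mul_iff_div_gcd_dvd hd, mul_ite, mul_zero]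
  congr 1
  exact_mod_cast (Nat.mul_div_cancel' hgd).symm

theorem orbifold_delta (h d : ℕ) (hh : 0 < h) (hdvd : d ∣ h) (δ r s : ℤ) :
    (1 / (h : ℂ)) * ∑ r' ∈ Finset.range h, ∑ s' ∈ Finset.range h,
        Complex.exp (2 * Real.pi * Complex.I * (((r * s' - s * r') * δ) / h)) *
          DeltaF (h / d) (r + r') (s + s') =
      (Int.gcd δ d : ℂ) * DeltaF (d / Int.gcd δ d) r s := by
  obtain ⟨m, rfl⟩ := hdvd
  rw [mul_comm d m] at hh ⊢
  have hd : 0 < d := Nat.pos_of_mul_pos_left hh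
  have hm : 0 < m := Nat.pos_of_mul_pos_right hh
  have hζ := Complex.isPrimitiveRoot_exp _ hh.ne'
  have hexp : ∀ r' s' : ℕ,
      Complex.exp (2 * Real.pi * Complex.I * (((r * s' - s * r') * δ) / (m * d : ℕ))) =
        Complex.exp (2 * Real.pi * Complex.I / (m * d : ℕ)) ^ ((r * s' - s * r') * δ) := by
    intro r' s'
    rw [← Complex.exp_int_mul]
    push_cast
    ring_nf
  simp_rw [hexp]
  rw [Nat.mul_div_cancel m hd, hζ.sum_sum_zpow_wedge_mul_deltaF hm hd, deltaF_mul_right hd.ne',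
    ← Nat.cast_mul, one_div, inv_mul_cancel_left₀ (by exact_mod_cast hh.ne')]
end
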